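/- The Malvenuto–Reutenauer coproduct Δ on k[S^∞] is coassociative, with counit given by the projection onto the degree-0 component k[S_0]. -/

import Mathlib

/-!
Write `st_[a, a+m) σ` for the standardization of the subword of `σ` formed by the values
`a, …, a + m - 1`. In the triple `(σ_i, σ'_{n-i}, w)` the identity `σ ∘ w = σ_i × σ'_{n-i}`
says that `w` lists the positions of the values `< i` and then those of the values `≥ i`, in
increasing order; hence `σ_i = st_[0, i) σ`, `σ'_{n-i} = st_[i, n) σ`, and `w` is forced. So
`Δσ = ∑ᵢ st_[0, i) σ ⊗ st_[i, n) σ`. Since standardizing a standardized subword is standardizing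
the corresponding subword of `σ`, both `(Δ ⊗ id) Δ σ` and `(id ⊗ Δ) Δ σ` are the sum, over
`0 ≤ a ≤ a + b ≤ n`, of `st_[0, a) σ ⊗ st_[a, a+b) σ ⊗ st_[a+b, n) σ`. The counit keeps only the
summand with an empty block, which is `σ` itself.
-/

open TensorProduct

attribute [local instance] Classical.propDecidable

/-- `w` is a `(p, n-p)`-shuffle in `S_n`. -/
def IsShuffle (p : ℕ) {n : ℕ} (w : Equiv.Perm (Fin n)) : Prop :=
  ∀ a b : Fin n, a < b → ((b : ℕ) < p ∨ p ≤ (a : ℕ)) → w a < w b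

/-- The block permutation `ρ × σ ∈ S_{p+q}`. -/
def blockPerm {p q : ℕ} (ρ : Equiv.Perm (Fin p)) (σ : Equiv.Perm (Fin q)) :
    Equiv.Perm (Fin (p + q)) :=
  finSumFinEquiv.permCongr (Equiv.sumCongr ρ σ)

/-- Basis of `k[S^∞]`: permutations of all finite orders. -/
abbrev PermSigma : Type := Σ n : ℕ, Equiv.Perm (Fin n)

/-- The graded vector space `k[S^∞] = ⊕_{n ≥ 0} k[S_n]`. -/
abbrev MR (k : Type*) [Field k] : Type _ := PermSigma →₀ k

/-- The Malvenuto-Reutenauer coproduct on a basis element `σ ∈ S_n`: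
`Δσ = Σ_{i=0}^{n} σ_i ⊗ σ'_{n-i}`, where `(σ_i, σ'_{n-i}, w)` is the unique triple with
`w` an `(i, n-i)`-shuffle and `σ = (σ_i × σ'_{n-i}) ∘ w⁻¹` (the sum below ranges over all
such triples, of which there is exactly one for each `i`). -/
noncomputable def mrCoprodBasis (k : Type*) [Field k] (x : PermSigma) :
    MR k ⊗[k] MR k :=
  ∑ i ∈ (Finset.range (x.1 + 1)).attach,
    ∑ d ∈ (Finset.univ : Finset (Equiv.Perm (Fin (i : ℕ)) ×
          Equiv.Perm (Fin (x.1 - (i : ℕ))) ×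
          Equiv.Perm (Fin ((i : ℕ) + (x.1 - (i : ℕ)))))).filter
        (fun d => IsShuffle (i : ℕ) d.2.2 ∧
          x.2 = (finCongr (Nat.add_sub_cancel'
              (Nat.lt_succ_iff.mp (Finset.mem_range.mp i.2)))).permCongr
            (blockPerm d.1 d.2.1 * d.2.2⁻¹)),
      Finsupp.single (⟨(i : ℕ), d.1⟩ : PermSigma) (1 : k) ⊗ₜ[k]
        Finsupp.single (⟨x.1 - (i : ℕ), d.2.1⟩ : PermSigma) (1 : k)

/-- The Malvenuto-Reutenauer coproduct, extended linearly to `k[S^∞]`. -/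
noncomputable def mrCoprodL (k : Type*) [Field k] : MR k →ₗ[k] MR k ⊗[k] MR k :=
  Finsupp.lsum k fun x => LinearMap.toSpanSingleton k (MR k ⊗[k] MR k) (mrCoprodBasis k x)

/-- The counit: projection onto the degree-0 component (the coefficient of the empty
permutation). -/
noncomputable def mrCounit (k : Type*) [Field k] : MR k →ₗ[k] k :=
  Finsupp.lapply (⟨0, (1 : Equiv.Perm (Fin 0))⟩ : PermSigma)

open Equiv Finset

/-- `ρ ∈ S_m` is the standardization of the subword of `σ` formed by the (0-indexed) values
`a, …, a + m - 1`, which occur in `σ` at the increasing positions `f 0 < ⋯ < f (m - 1)`. -/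
def IsStdRestrict {n m : ℕ} (σ : Perm (Fin n)) (a : ℕ) (ρ : Perm (Fin m)) : Prop :=
  ∃ f : Fin m → Fin n, StrictMono f ∧ ∀ j, (σ (f j) : ℕ) = a + ρ j

section IsStdRestrict

variable {n m : ℕ} {σ : Perm (Fin n)} {a : ℕ} {ρ ρ' : Perm (Fin m)}

lemma range_eq_setOf_of_val_eq {f : Fin m → Fin n} (hf : ∀ j, (σ (f j) : ℕ) = a + ρ j) :
    Set.range f = {x | a ≤ (σ x : ℕ) ∧ (σ x : ℕ) < a + m} := by
  ext x
  constructor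
  · rintro ⟨j, rfl⟩
    have := (ρ j).isLt
    simp only [Set.mem_ofPred_eq, hf]
    omega
  · rintro ⟨hlo, hhi⟩
    refine ⟨ρ.symm ⟨σ x - a, by omega⟩, σ.injective (Fin.ext ?_)⟩
    rw [hf, apply_symm_apply, Fin.val_mk]
    omega

lemma isStdRestrict_iff_strictMono {f : Fin m → Fin n}
    (hf : ∀ j, (σ (f j) : ℕ) = a + ρ j) : IsStdRestrict σ a ρ ↔ StrictMono f := by
  refine ⟨fun ⟨g, hg, hg'⟩ => ?_, fun hmono => ⟨f, hmono, hf⟩⟩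
  suffices g = f from this ▸ hg
  exact funext fun j => σ.injective (Fin.ext ((hg' j).trans (hf j).symm))

lemma IsStdRestrict.unique (h : IsStdRestrict σ a ρ) (h' : IsStdRestrict σ a ρ') : ρ = ρ' := by
  obtain ⟨f, hf, hfv⟩ := h
  obtain ⟨f', hf', hfv'⟩ := h'
  have hff' : f = f' := (hf.range_inj hf').1 <|
    (range_eq_setOf_of_val_eq hfv).trans (range_eq_setOf_of_val_eq hfv').symm
  ext j
  have := hfv j
  rw [hff', hfv' j] at this
  omega

lemma card_filter_val_apply_mem_Ico (h : a + m ≤ n) :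
    #{x : Fin n | a ≤ (σ x : ℕ) ∧ (σ x : ℕ) < a + m} = m := by
  rw [card_equiv σ (t := {v : Fin n | a ≤ (v : ℕ) ∧ (v : ℕ) < a + m}) (by simp),
    ← card_map Fin.valEmbedding]
  convert Nat.card_Ico a (a + m) using 2
  · ext y
    simp only [mem_map, mem_filter, mem_univ, true_and, Fin.valEmbedding_apply, mem_Ico]
    exact ⟨fun ⟨v, hv, hy⟩ => hy ▸ hv, fun hy => ⟨⟨y, by omega⟩, hy, rfl⟩⟩
  · omega

lemma exists_isStdRestrict (σ : Perm (Fin n)) (h : a + m ≤ n) :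
    ∃ ρ : Perm (Fin m), IsStdRestrict σ a ρ := by
  set f := orderEmbOfFin _ (card_filter_val_apply_mem_Ico (σ := σ) h)
  have hf (j : Fin m) : a ≤ (σ (f j) : ℕ) ∧ (σ (f j) : ℕ) < a + m :=
    (mem_filter.mp (orderEmbOfFin_mem _ (card_filter_val_apply_mem_Ico (σ := σ) h) j)).2
  let g (j : Fin m) : Fin m := ⟨σ (f j) - a, by have := hf j; omega⟩
  have hg : Function.Injective g := fun j j' hjj' => by
    have := hf j; have := hf j'
    exact f.injective (σ.injective (Fin.ext (by simp only [g, Fin.mk.injEq] at hjj'; omega)))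
  refine ⟨ofBijective g (Finite.injective_iff_bijective.mp hg), f, f.strictMono, fun j => ?_⟩
  have := hf j
  simp only [ofBijective_apply, g]
  omega

end IsStdRestrict

/-- The standardization of the values `a, …, a + m - 1` of `σ`; junk (`1`) unless `a + m ≤ n`. -/
noncomputable def stdRestrict {n : ℕ} (σ : Perm (Fin n)) (a m : ℕ) : Perm (Fin m) :=
  if h : ∃ ρ : Perm (Fin m), IsStdRestrict σ a ρ then h.choose else 1

section StdRestrict

variable {n m : ℕ} {σ : Perm (Fin n)} {a : ℕ} {ρ : Perm (Fin m)}

lemma isStdRestrict_stdRestrict (σ : Perm (Fin n)) (h : a + m ≤ n) :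
    IsStdRestrict σ a (stdRestrict σ a m) := by
  rw [stdRestrict, dif_pos (exists_isStdRestrict σ h)]
  exact (exists_isStdRestrict σ h).choose_spec

lemma IsStdRestrict.stdRestrict_eq (h : IsStdRestrict σ a ρ) : stdRestrict σ a m = ρ := by
  rw [stdRestrict, dif_pos ⟨ρ, h⟩]
  exact (Exists.choose_spec ⟨ρ, h⟩).unique h

lemma isStdRestrict_iff_eq (h : a + m ≤ n) : IsStdRestrict σ a ρ ↔ ρ = stdRestrict σ a m :=
  ⟨fun hρ => hρ.stdRestrict_eq.symm, fun hρ => hρ ▸ isStdRestrict_stdRestrict σ h⟩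

lemma IsStdRestrict.trans {l b : ℕ} {τ : Perm (Fin l)} (h : IsStdRestrict σ a ρ)
    (h' : IsStdRestrict ρ b τ) : IsStdRestrict σ (a + b) τ := by
  obtain ⟨f, hf, hfv⟩ := h
  obtain ⟨g, hg, hgv⟩ := h'
  exact ⟨f ∘ g, hf.comp hg, fun j => by simp only [Function.comp_apply, hfv, hgv]; omega⟩

lemma stdRestrict_stdRestrict {l b : ℕ} (σ : Perm (Fin n)) (h : a + m ≤ n) (h' : b + l ≤ m) :
    stdRestrict (stdRestrict σ a m) b l = stdRestrict σ (a + b) l :=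
  ((isStdRestrict_stdRestrict σ h).trans (isStdRestrict_stdRestrict _ h')).stdRestrict_eq.symm

lemma stdRestrict_zero_self (σ : Perm (Fin n)) : stdRestrict σ 0 n = σ :=
  IsStdRestrict.stdRestrict_eq ⟨id, strictMono_id, fun _ => (zero_add _).symm⟩

end StdRestrict

lemma isShuffle_iff {p q : ℕ} (w : Perm (Fin (p + q))) :
    IsShuffle p w ↔ StrictMono (w ∘ Fin.castAdd q) ∧ StrictMono (w ∘ Fin.natAdd p) := by
  refine ⟨fun hw => ⟨fun _ j' hjj' => hw _ _ hjj' (Or.inl (by simp)),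
    fun _ _ hjj' => hw _ _ (by simpa using hjj') (Or.inr (by simp))⟩, fun ⟨hl, hr⟩ => ?_⟩
  intro x y hxy hxy'
  induction x using Fin.addCases with
  | left i =>
    induction y using Fin.addCases with
    | left j => exact hl ((Fin.strictMono_castAdd q).lt_iff_lt.mp hxy)
    | right j =>
      simp only [Fin.val_natAdd, Fin.val_castAdd] at hxy'
      omega
  | right i =>
    induction y using Fin.addCases with
    | left j =>
      have := Fin.lt_def.mp hxy
      simp only [Fin.val_natAdd, Fin.val_castAdd] at this
      omega
    | right j => exact hr ((Fin.strictMono_natAdd p).lt_iff_lt.mp hxy)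

lemma blockPerm_castAdd {p q : ℕ} (ρ : Perm (Fin p)) (ρ' : Perm (Fin q)) (j : Fin p) :
    blockPerm ρ ρ' (Fin.castAdd q j) = Fin.castAdd q (ρ j) := by
  simp [blockPerm, permCongr_apply]

lemma blockPerm_natAdd {p q : ℕ} (ρ : Perm (Fin p)) (ρ' : Perm (Fin q)) (j : Fin q) :
    blockPerm ρ ρ' (Fin.natAdd p j) = Fin.natAdd p (ρ' j) := by
  simp [blockPerm, permCongr_apply]

lemma isShuffle_and_eq_blockPerm_mul_inv_iff {p q : ℕ} (σ : Perm (Fin (p + q)))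
    (ρ : Perm (Fin p)) (ρ' : Perm (Fin q)) (w : Perm (Fin (p + q))) :
    IsShuffle p w ∧ σ = blockPerm ρ ρ' * w⁻¹ ↔
      IsStdRestrict σ 0 ρ ∧ IsStdRestrict σ p ρ' ∧ w = σ⁻¹ * blockPerm ρ ρ' := by
  rw [eq_mul_inv_iff_mul_eq, ← eq_inv_mul_iff_mul_eq, isShuffle_iff, ← and_assoc]
  refine and_congr_left fun hw => ?_
  subst hw
  rw [isStdRestrict_iff_strictMono (f := (σ⁻¹ * blockPerm ρ ρ') ∘ Fin.castAdd q)
      (fun j => by simp [blockPerm_castAdd]),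
    isStdRestrict_iff_strictMono (f := (σ⁻¹ * blockPerm ρ ρ') ∘ Fin.natAdd p)
      (fun j => by simp [blockPerm_natAdd])]

lemma isShuffle_and_eq_permCongr_iff {p q n : ℕ} (h : p + q = n) (σ : Perm (Fin n))
    (d : Perm (Fin p) × Perm (Fin q) × Perm (Fin (p + q))) :
    IsShuffle p d.2.2 ∧ σ = (finCongr h).permCongr (blockPerm d.1 d.2.1 * d.2.2⁻¹) ↔
      d = (stdRestrict σ 0 p, stdRestrict σ p q,
        ((finCongr h.symm).permCongr σ)⁻¹ * blockPerm (stdRestrict σ 0 p) (stdRestrict σ p q)) := by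
  subst h
  obtain ⟨ρ, ρ', w⟩ := d
  simp only [finCongr_refl, permCongr_def, refl_symm, trans_refl, refl_trans, Prod.mk.injEq]
  rw [isShuffle_and_eq_blockPerm_mul_inv_iff, isStdRestrict_iff_eq (by omega),
    isStdRestrict_iff_eq le_rfl]
  constructor <;> rintro ⟨rfl, rfl, rfl⟩ <;> exact ⟨rfl, rfl, rfl⟩

noncomputable def mrBasis (k : Type*) [Field k] {m : ℕ} (ρ : Perm (Fin m)) : MR k :=
  Finsupp.single ⟨m, ρ⟩ 1

section Coalgebra

variable {k : Type*} [Field k]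

lemma mrCoprodL_mrBasis {n : ℕ} (σ : Perm (Fin n)) :
    mrCoprodL k (mrBasis k σ) = ∑ i ∈ range (n + 1),
      mrBasis k (stdRestrict σ 0 i) ⊗ₜ[k] mrBasis k (stdRestrict σ i (n - i)) := by
  rw [mrBasis, mrCoprodL, Finsupp.lsum_single, LinearMap.toSpanSingleton_apply, one_smul,
    mrCoprodBasis, ← sum_attach (range (n + 1))]
  refine sum_congr rfl fun i _ => ?_
  simp only [isShuffle_and_eq_permCongr_iff, filter_eq', mem_univ, if_true, sum_singleton]
  rfl

lemma mrCoprod_coassoc_mrBasis {n : ℕ} (σ : Perm (Fin n)) :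
    TensorProduct.assoc k (MR k) (MR k) (MR k)
        (TensorProduct.map (mrCoprodL k) LinearMap.id (mrCoprodL k (mrBasis k σ))) =
      TensorProduct.map LinearMap.id (mrCoprodL k) (mrCoprodL k (mrBasis k σ)) := by
  let T (a b : ℕ) : MR k ⊗[k] (MR k ⊗[k] MR k) :=
    mrBasis k (stdRestrict σ 0 a) ⊗ₜ (mrBasis k (stdRestrict σ a b) ⊗ₜ
      mrBasis k (stdRestrict σ (a + b) (n - (a + b))))
  calc _ = ∑ i ∈ range (n + 1), ∑ j ∈ range (i + 1), T j (i - j) := by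
        simp only [mrCoprodL_mrBasis, map_sum, map_tmul, sum_tmul, assoc_tmul, LinearMap.id_apply]
        refine sum_congr rfl fun i hi => sum_congr rfl fun j hj => ?_
        rw [mem_range] at hi hj
        rw [stdRestrict_stdRestrict σ (by omega : 0 + i ≤ n) (by omega : 0 + j ≤ i),
          stdRestrict_stdRestrict σ (by omega : 0 + i ≤ n) (by omega : j + (i - j) ≤ i)]
        simp only [T, zero_add]
        rw [Nat.add_sub_cancel' (by omega : j ≤ i)]
    _ = ∑ i ∈ range (n + 1), ∑ l ∈ range (n + 1 - i), T i l := sum_range_diag_flip _ _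
    _ = _ := by
        simp only [mrCoprodL_mrBasis, map_sum, map_tmul, tmul_sum, LinearMap.id_apply]
        refine sum_congr rfl fun i hi => ?_
        rw [mem_range] at hi
        rw [Nat.sub_add_comm (by omega : i ≤ n)]
        refine sum_congr rfl fun l hl => ?_
        rw [mem_range] at hl
        have hi' : i + (n - i) ≤ n := by omega
        rw [stdRestrict_stdRestrict σ hi' (by omega : l + (n - i - l) ≤ n - i),
          stdRestrict_stdRestrict σ hi' (by omega : 0 + l ≤ n - i),
          add_zero, Nat.sub_sub]

lemma mrCounit_mrBasis {m : ℕ} (ρ : Perm (Fin m)) :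
    mrCounit k (mrBasis k ρ) = if m = 0 then 1 else 0 := by
  rw [mrCounit, mrBasis, Finsupp.lapply_apply]
  split_ifs with hm
  · subst hm
    rw [Subsingleton.elim ρ 1, Finsupp.single_eq_same]
  · exact Finsupp.single_eq_of_ne fun h => hm (congrArg Sigma.fst h).symm

lemma mrCounit_lid_mrBasis {n : ℕ} (σ : Perm (Fin n)) :
    TensorProduct.lid k (MR k)
      (TensorProduct.map (mrCounit k) LinearMap.id (mrCoprodL k (mrBasis k σ))) = mrBasis k σ := by
  simp only [mrCoprodL_mrBasis, map_sum, map_tmul, lid_tmul, mrCounit_mrBasis,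
    LinearMap.id_apply, ite_smul, one_smul, zero_smul, sum_ite_eq', mem_range]
  rw [if_pos n.succ_pos, Nat.sub_zero, stdRestrict_zero_self]

lemma mrCounit_rid_mrBasis {n : ℕ} (σ : Perm (Fin n)) :
    TensorProduct.rid k (MR k)
      (TensorProduct.map LinearMap.id (mrCounit k) (mrCoprodL k (mrBasis k σ))) = mrBasis k σ := by
  simp only [mrCoprodL_mrBasis, map_sum, map_tmul, rid_tmul, mrCounit_mrBasis,
    LinearMap.id_apply, ite_smul, one_smul, zero_smul]
  rw [sum_eq_single n (fun i hi hin => if_neg (by rw [mem_range] at hi; omega))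
    (fun hn => absurd (self_mem_range_succ n) hn), if_pos (Nat.sub_self n), stdRestrict_zero_self]

lemma mrCoprodL_coassoc :
    (TensorProduct.assoc k (MR k) (MR k) (MR k)).toLinearMap ∘ₗ
        TensorProduct.map (mrCoprodL k) LinearMap.id ∘ₗ mrCoprodL k =
      TensorProduct.map LinearMap.id (mrCoprodL k) ∘ₗ mrCoprodL k :=
  Finsupp.lhom_ext' fun x => LinearMap.ext_ring (mrCoprod_coassoc_mrBasis x.2)

lemma mrCounit_lid_comp_mrCoprodL :
    (TensorProduct.lid k (MR k)).toLinearMap ∘ₗ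
        TensorProduct.map (mrCounit k) LinearMap.id ∘ₗ mrCoprodL k = LinearMap.id :=
  Finsupp.lhom_ext' fun x => LinearMap.ext_ring (mrCounit_lid_mrBasis x.2)

lemma mrCounit_rid_comp_mrCoprodL :
    (TensorProduct.rid k (MR k)).toLinearMap ∘ₗ
        TensorProduct.map LinearMap.id (mrCounit k) ∘ₗ mrCoprodL k = LinearMap.id :=
  Finsupp.lhom_ext' fun x => LinearMap.ext_ring (mrCounit_rid_mrBasis x.2)

end Coalgebra

theorem mrCoprod_coassoc_and_counit_general (k : Type*) [Field k] :
    (∀ f : MR k,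
      (TensorProduct.assoc k (MR k) (MR k) (MR k))
        ((TensorProduct.map (mrCoprodL k) LinearMap.id) (mrCoprodL k f)) =
      (TensorProduct.map LinearMap.id (mrCoprodL k)) (mrCoprodL k f)) ∧
    (∀ f : MR k,
      (TensorProduct.lid k (MR k))
        ((TensorProduct.map (mrCounit k) LinearMap.id) (mrCoprodL k f)) = f ∧
      (TensorProduct.rid k (MR k))
        ((TensorProduct.map LinearMap.id (mrCounit k)) (mrCoprodL k f)) = f) :=
  ⟨LinearMap.congr_fun mrCoprodL_coassoc, fun f =>
    ⟨LinearMap.congr_fun mrCounit_lid_comp_mrCoprodL f,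
      LinearMap.congr_fun mrCounit_rid_comp_mrCoprodL f⟩⟩

/-- the Malvenuto-Reutenauer coproduct is coassociative, with counit the
projection onto the degree-0 component `k[S_0]`. -/
theorem mrCoprod_coassoc_and_counit (k : Type*) [Field k] [CharZero k] :
    (∀ f : MR k,
      (TensorProduct.assoc k (MR k) (MR k) (MR k))
        ((TensorProduct.map (mrCoprodL k) LinearMap.id) (mrCoprodL k f)) =
      (TensorProduct.map LinearMap.id (mrCoprodL k)) (mrCoprodL k f)) ∧
    (∀ f : MR k,
      (TensorProduct.lid k (MR k))
        ((TensorProduct.map (mrCounit k) LinearMap.id) (mrCoprodL k f)) = f ∧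
      (TensorProduct.rid k (MR k))
        ((TensorProduct.map LinearMap.id (mrCounit k)) (mrCoprodL k f)) = f) :=
  mrCoprod_coassoc_and_counit_general k
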